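/- arXiv:1209.0375 — 7 statements merged into one kernel-verified Lean document; each statement's English description precedes it below -/
import Mathlib

section
/- If H is a connected elder graph, then there exists an outbranching T that is a subgraph of H with V(T) = V(H) such that the pair (H, T) is a vineyard. -/
structure Dgraph (V : Type) where
  adj : V → V → Prop
  asym : ∀ u v, adj u v → ¬ adj v u

def Dgraph.Fork {V : Type} (H : Dgraph V) (u v : V) : Prop :=
  u ≠ v ∧ ¬ H.adj u v ∧ ¬ H.adj v u ∧ ∃ w, H.adj u w ∧ H.adj v w

def Dgraph.Elder {V : Type} (H : Dgraph V) : Prop :=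
  ∀ u v, ¬ H.Fork u v

def Dgraph.Connected {V : Type} (H : Dgraph V) : Prop :=
  Nonempty V ∧ ∀ u v : V, Relation.ReflTransGen (fun a b => H.adj a b ∨ H.adj b a) u v

def IsOutbranching {V : Type} (T : V → V → Prop) (r : V) : Prop :=
  (∀ v, Relation.ReflTransGen T r v) ∧ (∀ u, ¬ T u r) ∧ (∀ v, v ≠ r → ∃! u, T u v)

def IsVineyard {V : Type} (H : Dgraph V) (T : V → V → Prop) (r : V) : Prop :=
  IsOutbranching T r ∧ (∀ u v, T u v → H.adj u v) ∧
    ∀ u v, H.adj u v → Relation.ReflTransGen T u v ∨ Relation.ReflTransGen T v u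

/-!
The outbranching is grown one vertex at a time, as in depth-first search. We keep an
outbranching `T ⊆ H` on a vertex set `S` such that every edge of `H` inside `S` joins
`T`-comparable vertices and the vertices of `S` with a neighbour outside `S` are pairwise
comparable, i.e. lie on one root path. Let `x` be the deepest of them and `y ∉ S` a neighbour
of `x`: every neighbour of `y` in `S` is an ancestor of `x`, so it suffices to attach `y`
comparably to all ancestors of `x`. If `x → y`, hang `y` below `x`; if `y → r`, make `y` the new
root. Otherwise `y → x`, and the root path to `x` has an edge `q → p` with `y → p` but not
`y → q`. As `q` and `y` share the out-neighbour `p`, the elder property forces `q → y`, and `y`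
is inserted between `q` and `p`.
-/

open Relation

section Relations

variable {α : Type*}

theorem Relation.ReflTransGen.exists_boundary_step {R : α → α → Prop} {P : α → Prop}
    {a b : α} (h : ReflTransGen R a b) (ha : P a) (hb : ¬P b) :
    ∃ c d, P c ∧ ¬P d ∧ R c d ∧ ReflTransGen R d b := by
  induction h using ReflTransGen.head_induction_on with
  | refl => exact absurd ha hb
  | @head a c hac hcb ih =>
    by_cases hc : P c
    · exact ih hc
    · exact ⟨a, c, ha, hc, hac, hcb⟩

theorem Relation.ReflTransGen.total_of_left_unique {R : α → α → Prop} {a b c : α}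
    (U : Relator.LeftUnique R) (hac : ReflTransGen R a c) (hbc : ReflTransGen R b c) :
    ReflTransGen R a b ∨ ReflTransGen R b a := by
  have U' : Relator.RightUnique (Function.swap R) := fun _ _ _ h₁ h₂ => U h₁ h₂
  exact ((reflTransGen_swap.2 hac).total_of_right_unique U' (reflTransGen_swap.2 hbc)).symm.imp
    reflTransGen_swap.1 reflTransGen_swap.1

theorem IsChain.exists_forall_rel {r : α → α → Prop} [IsPreorder α r] {s : Set α}
    (hc : IsChain r s) (hs : s.Finite) (hne : s.Nonempty) : ∃ m ∈ s, ∀ a ∈ s, r a m := by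
  have : Nonempty s := hne.to_subtype
  have := hs.fintype
  obtain ⟨m, hm⟩ := (directedOn_iff_directed.1 hc.directedOn).finset_le Finset.univ
  exact ⟨m, m.2, fun a ha => hm ⟨a, ha⟩ (Finset.mem_univ _)⟩

def addEdge (T : α → α → Prop) (u v : α) : α → α → Prop :=
  fun a b => T a b ∨ a = u ∧ b = v

def subdivideEdge (T : α → α → Prop) (q p y : α) : α → α → Prop :=
  fun a b => (T a b ∧ ¬(a = q ∧ b = p)) ∨ (a = q ∧ b = y) ∨ (a = y ∧ b = p)

theorem le_addEdge (T : α → α → Prop) (u v : α) : T ≤ addEdge T u v :=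
  fun _ _ => Or.inl

theorem Relation.ReflTransGen.subdivideEdge {T : α → α → Prop} {q p y a b : α}
    (h : ReflTransGen T a b) : ReflTransGen (subdivideEdge T q p y) a b := by
  refine reflTransGen_closed (fun u v huv => ?_) _ _ h
  by_cases hne : u = q ∧ v = p
  · obtain ⟨rfl, rfl⟩ := hne
    exact .head (Or.inr (Or.inl ⟨rfl, rfl⟩)) (.single (Or.inr (Or.inr ⟨rfl, rfl⟩)))
  · exact ReflTransGen.single (Or.inl ⟨huv, hne⟩)

end Relations

structure IsPartialOutbranching {V : Type} (S : Finset V) (T : V → V → Prop) (r : V) :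
    Prop where
  root_mem : r ∈ S
  mem_of_rel : ∀ ⦃u v⦄, T u v → u ∈ S ∧ v ∈ S
  reach : ∀ v ∈ S, ReflTransGen T r v
  not_rel_root : ∀ u, ¬T u r
  leftUnique : Relator.LeftUnique T

theorem IsPartialOutbranching.isOutbranching {V : Type} [Fintype V] {T : V → V → Prop}
    {r : V} (h : IsPartialOutbranching Finset.univ T r) : IsOutbranching T r := by
  refine ⟨fun v => h.reach v (Finset.mem_univ v), h.not_rel_root, fun v hv => ?_⟩
  obtain ⟨u, -, hu⟩ := (h.reach v (Finset.mem_univ v)).cases_tail.resolve_left hv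
  exact ⟨u, hu, fun w hw => h.leftUnique hw hu⟩

namespace IsPartialOutbranching

variable {V : Type} [DecidableEq V] {S : Finset V} {T : V → V → Prop} {r x y : V}

theorem addLeaf (h : IsPartialOutbranching S T r) (hy : y ∉ S) (hxS : x ∈ S) :
    IsPartialOutbranching (insert y S) (addEdge T x y) r where
  root_mem := Finset.mem_insert_of_mem h.root_mem
  mem_of_rel := by
    rintro u v (huv | ⟨rfl, rfl⟩)
    · exact (h.mem_of_rel huv).imp (Finset.mem_insert_of_mem ·) (Finset.mem_insert_of_mem ·)
    · exact ⟨Finset.mem_insert_of_mem hxS, Finset.mem_insert_self _ _⟩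
  reach v hv := by
    rcases Finset.mem_insert.1 hv with rfl | hvS
    · exact (ReflTransGen.mono (le_addEdge T x v) _ _ (h.reach x hxS)).tail (Or.inr ⟨rfl, rfl⟩)
    · exact ReflTransGen.mono (le_addEdge T x y) _ _ (h.reach v hvS)
  not_rel_root := by
    rintro u (hu | ⟨-, rfl⟩)
    exacts [h.not_rel_root u hu, hy h.root_mem]
  leftUnique := by
    rintro a b c (hac | ⟨rfl, rfl⟩) (hbc | ⟨rfl, hcy⟩)
    · exact h.leftUnique hac hbc
    · exact absurd (h.mem_of_rel hac).2 (hcy ▸ hy)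
    · exact absurd (h.mem_of_rel hbc).2 hy
    · rfl

theorem addRoot (h : IsPartialOutbranching S T r) (hy : y ∉ S) :
    IsPartialOutbranching (insert y S) (addEdge T y r) y where
  root_mem := Finset.mem_insert_self y S
  mem_of_rel := by
    rintro u v (huv | ⟨rfl, rfl⟩)
    · exact (h.mem_of_rel huv).imp (Finset.mem_insert_of_mem ·) (Finset.mem_insert_of_mem ·)
    · exact ⟨Finset.mem_insert_self _ _, Finset.mem_insert_of_mem h.root_mem⟩
  reach v hv := by
    rcases Finset.mem_insert.1 hv with rfl | hvS
    · exact ReflTransGen.refl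
    · exact .head (Or.inr ⟨rfl, rfl⟩)
        (ReflTransGen.mono (le_addEdge T y r) _ _ (h.reach v hvS))
  not_rel_root := by
    rintro u (hu | ⟨-, hyr⟩)
    exacts [hy (h.mem_of_rel hu).2, hy (hyr ▸ h.root_mem)]
  leftUnique := by
    rintro a b c (hac | ⟨rfl, rfl⟩) (hbc | ⟨rfl, hcr⟩)
    · exact h.leftUnique hac hbc
    · exact absurd (hcr ▸ hac) (h.not_rel_root a)
    · exact absurd hbc (h.not_rel_root b)
    · rfl

theorem subdivide {p q : V} (h : IsPartialOutbranching S T r) (hy : y ∉ S) (hqp : T q p) :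
    IsPartialOutbranching (insert y S) (subdivideEdge T q p y) r where
  root_mem := Finset.mem_insert_of_mem h.root_mem
  mem_of_rel := by
    rintro u v (⟨huv, -⟩ | ⟨rfl, rfl⟩ | ⟨rfl, rfl⟩)
    · exact (h.mem_of_rel huv).imp (Finset.mem_insert_of_mem ·) (Finset.mem_insert_of_mem ·)
    · exact ⟨Finset.mem_insert_of_mem (h.mem_of_rel hqp).1, Finset.mem_insert_self _ _⟩
    · exact ⟨Finset.mem_insert_self _ _, Finset.mem_insert_of_mem (h.mem_of_rel hqp).2⟩
  reach v hv := by
    rcases Finset.mem_insert.1 hv with rfl | hvS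
    · exact (h.reach q (h.mem_of_rel hqp).1).subdivideEdge.tail (Or.inr (Or.inl ⟨rfl, rfl⟩))
    · exact (h.reach v hvS).subdivideEdge
  not_rel_root := by
    rintro u (⟨hu, -⟩ | ⟨-, hry⟩ | ⟨-, hrp⟩)
    · exact h.not_rel_root u hu
    · exact hy (hry ▸ h.root_mem)
    · exact h.not_rel_root q (hrp ▸ hqp)
  leftUnique := by
    have hTy : ∀ u, ¬T u y := fun u hu => hy (h.mem_of_rel hu).2
    have hparent : ∀ ⦃u⦄, T u p → u = q := fun _ hu => h.leftUnique hu hqp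
    have hpy : p ≠ y := ne_of_mem_of_not_mem (h.mem_of_rel hqp).2 hy
    rintro a b c (⟨hac, hac'⟩ | ⟨ha, hc⟩ | ⟨ha, hc⟩)
      (⟨hbc, hbc'⟩ | ⟨hb, hc'⟩ | ⟨hb, hc'⟩)
    · exact h.leftUnique hac hbc
    · exact absurd (hc' ▸ hac) (hTy a)
    · exact absurd ⟨hparent (hc' ▸ hac), hc'⟩ hac'
    · exact absurd (hc ▸ hbc) (hTy b)
    · exact ha.trans hb.symm
    · exact absurd (hc'.symm.trans hc) hpy
    · exact absurd ⟨hparent (hc ▸ hbc), hc⟩ hbc'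
    · exact absurd (hc.symm.trans hc') hpy
    · exact ha.trans hb.symm

end IsPartialOutbranching

namespace Dgraph

variable {V : Type} {H : Dgraph V}

theorem Elder.adj_or_adj (helder : H.Elder) {u v w : V} (hne : u ≠ v) (hu : H.adj u w)
    (hv : H.adj v w) : H.adj u v ∨ H.adj v u := by
  by_contra! h
  exact helder u v ⟨hne, h.1, h.2, w, hu, hv⟩

def boundary (H : Dgraph V) (S : Finset V) : Set V :=
  {v | v ∈ S ∧ ∃ z ∉ S, H.adj z v ∨ H.adj v z}

theorem finite_boundary (H : Dgraph V) (S : Finset V) : (H.boundary S).Finite :=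
  S.finite_toSet.subset fun _ hv => hv.1

theorem Connected.boundary_nonempty (hconn : H.Connected) {S : Finset V} {r v : V}
    (hr : r ∈ S) (hv : v ∉ S) : (H.boundary S).Nonempty := by
  obtain ⟨c, d, hc, hd, hcd, -⟩ := (hconn.2 r v).exists_boundary_step (P := (· ∈ S)) hr hv
  exact ⟨c, hc, d, hd, hcd.symm⟩

theorem boundary_insert_subset [DecidableEq V] (H : Dgraph V) (S : Finset V) (y : V) :
    H.boundary (insert y S) ⊆ insert y (H.boundary S) := by
  rintro v ⟨hv, z, hz, hzv⟩
  rcases Finset.mem_insert.1 hv with rfl | hv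
  · exact Set.mem_insert _ _
  · exact Set.mem_insert_of_mem _ ⟨hv, z, fun h => hz (Finset.mem_insert_of_mem h), hzv⟩

structure PartialVineyard (H : Dgraph V) (S : Finset V) (T : V → V → Prop) (r : V) : Prop
    extends IsPartialOutbranching S T r where
  adj_of_rel : ∀ ⦃u v⦄, T u v → H.adj u v
  comparable : ∀ u ∈ S, ∀ v ∈ S, H.adj u v → ReflTransGen T u v ∨ ReflTransGen T v u
  isChain_boundary : IsChain (ReflTransGen T) (H.boundary S)

theorem partialVineyard_singleton (r : V) : H.PartialVineyard {r} (fun _ _ => False) r where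
  root_mem := Finset.mem_singleton_self r
  mem_of_rel := fun _ _ => False.elim
  reach := fun v hv => Finset.mem_singleton.1 hv ▸ ReflTransGen.refl
  not_rel_root := fun _ => id
  leftUnique := fun _ _ _ => False.elim
  adj_of_rel := fun _ _ => False.elim
  comparable := fun u hu v hv _ => by
    rw [Finset.mem_singleton.1 hu, Finset.mem_singleton.1 hv]
    exact Or.inl ReflTransGen.refl
  isChain_boundary :=
    (Set.subsingleton_singleton.anti fun _ hv => Finset.mem_singleton.1 hv.1).isChain

namespace PartialVineyard

variable {S : Finset V} {T T' : V → V → Prop} {r r' x y : V}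

theorem extend [DecidableEq V] (h : H.PartialVineyard S T r) (hy : y ∉ S)
    (ht' : IsPartialOutbranching (insert y S) T' r') (hadj : ∀ ⦃u v⦄, T' u v → H.adj u v)
    (hlift : ReflTransGen T ≤ ReflTransGen T')
    (hcomp : ∀ b ∈ H.boundary S, ReflTransGen T' b y ∨ ReflTransGen T' y b) :
    H.PartialVineyard (insert y S) T' r' where
  toIsPartialOutbranching := ht'
  adj_of_rel := hadj
  comparable u hu v hv huv := by
    rcases Finset.mem_insert.1 hu with rfl | huS <;> rcases Finset.mem_insert.1 hv with rfl | hvS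
    · exact Or.inl ReflTransGen.refl
    · exact (hcomp v ⟨hvS, u, hy, Or.inl huv⟩).symm
    · exact hcomp u ⟨huS, v, hy, Or.inr huv⟩
    · exact (h.comparable u huS v hvS huv).imp (hlift _ _) (hlift _ _)
  isChain_boundary :=
    ((h.isChain_boundary.mono_rel hlift).insert fun b hb _ =>
      (hcomp b hb).symm).mono (H.boundary_insert_subset S y)

theorem addLeaf [DecidableEq V] (h : H.PartialVineyard S T r) (hy : y ∉ S) (hxS : x ∈ S)
    (hx : ∀ b ∈ H.boundary S, ReflTransGen T b x) (hxy : H.adj x y) :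
    H.PartialVineyard (insert y S) (addEdge T x y) r :=
  h.extend hy (h.toIsPartialOutbranching.addLeaf hy hxS)
    (by rintro u v (huv | ⟨rfl, rfl⟩); exacts [h.adj_of_rel huv, hxy])
    (ReflTransGen.mono (le_addEdge T x y))
    fun b hb =>
      .inl ((ReflTransGen.mono (le_addEdge T x y) _ _ (hx b hb)).tail (.inr ⟨rfl, rfl⟩))

theorem addRoot [DecidableEq V] (h : H.PartialVineyard S T r) (hy : y ∉ S) (hyr : H.adj y r) :
    H.PartialVineyard (insert y S) (addEdge T y r) y :=
  have ht' := h.toIsPartialOutbranching.addRoot hy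
  h.extend hy ht' (by rintro u v (huv | ⟨rfl, rfl⟩); exacts [h.adj_of_rel huv, hyr])
    (ReflTransGen.mono (le_addEdge T y r))
    fun b hb => .inr (ht'.reach b (Finset.mem_insert_of_mem hb.1))

theorem subdivide [DecidableEq V] {p q : V} (h : H.PartialVineyard S T r) (hy : y ∉ S)
    (hx : ∀ b ∈ H.boundary S, ReflTransGen T b x) (hqp : T q p) (hqy : H.adj q y)
    (hyp : H.adj y p) (hpx : ReflTransGen T p x) :
    H.PartialVineyard (insert y S) (subdivideEdge T q p y) r := by
  have hyp' : subdivideEdge T q p y y p := Or.inr (Or.inr ⟨rfl, rfl⟩)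
  refine h.extend hy (h.toIsPartialOutbranching.subdivide hy hqp) ?_
    (fun _ _ => ReflTransGen.subdivideEdge) fun b hb => ?_
  · rintro u v (⟨huv, -⟩ | ⟨rfl, rfl⟩ | ⟨rfl, rfl⟩)
    exacts [h.adj_of_rel huv, hqy, hyp]
  rcases (hx b hb).total_of_left_unique h.leftUnique hpx with hbp | hpb
  · rcases hbp.cases_tail with rfl | ⟨c, hbc, hcp⟩
    · exact .inr (.single hyp')
    · obtain rfl : c = q := h.leftUnique hcp hqp
      exact .inl (hbc.subdivideEdge.tail (Or.inr (Or.inl ⟨rfl, rfl⟩)))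
  · exact .inr (.head hyp' hpb.subdivideEdge)

theorem exists_insert [DecidableEq V] (helder : H.Elder) (hconn : H.Connected)
    (h : H.PartialVineyard S T r) {v : V} (hv : v ∉ S) :
    ∃ y ∉ S, ∃ T' r', H.PartialVineyard (insert y S) T' r' := by
  obtain ⟨x, ⟨hxS, y, hy, hyx⟩, hx⟩ := h.isChain_boundary.exists_forall_rel
    (H.finite_boundary S) (hconn.boundary_nonempty h.root_mem hv)
  refine ⟨y, hy, ?_⟩
  by_cases hxy : H.adj x y
  · exact ⟨_, _, h.addLeaf hy hxS hx hxy⟩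
  by_cases hyr : H.adj y r
  · exact ⟨_, _, h.addRoot hy hyr⟩
  obtain ⟨q, p, hyq, hyp, hqp, hpx⟩ := (h.reach x hxS).exists_boundary_step
    (P := fun a => ¬H.adj y a) hyr (not_not.2 (hyx.resolve_right hxy))
  rw [not_not] at hyp
  have hqS := (h.mem_of_rel hqp).1
  have hqy : H.adj q y :=
    (helder.adj_or_adj (ne_of_mem_of_not_mem hqS hy) (h.adj_of_rel hqp) hyp).resolve_right hyq
  exact ⟨_, _, h.subdivide hy hx hqp hqy hyp hpx⟩

theorem exists_univ [Fintype V] [DecidableEq V] (helder : H.Elder) (hconn : H.Connected)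
    {S : Finset V} {T : V → V → Prop} {r : V} (h : H.PartialVineyard S T r) :
    ∃ T' r', H.PartialVineyard Finset.univ T' r' := by
  by_cases hS : ∃ v, v ∉ S
  · obtain ⟨v, hv⟩ := hS
    obtain ⟨y, hy, T', r', h'⟩ := h.exists_insert helder hconn hv
    exact h'.exists_univ helder hconn
  · exact ⟨T, r, Finset.eq_univ_iff_forall.2 (not_exists_not.1 hS) ▸ h⟩
termination_by Sᶜ.card
decreasing_by exact Finset.card_lt_card (Finset.compl_ssubset_compl.2 (Finset.ssubset_insert hy))

theorem isVineyard [Fintype V] (h : H.PartialVineyard Finset.univ T r) : IsVineyard H T r :=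
  ⟨h.isOutbranching, h.adj_of_rel,
    fun u v => h.comparable u (Finset.mem_univ u) v (Finset.mem_univ v)⟩


end PartialVineyard

end Dgraph

/-- If `H` is a connected elder graph, then there exists an outbranching `T ⊆ H`
with `V(T) = V(H)` such that `(H, T)` is a vineyard. -/
theorem elder_connected_exists_vineyard {V : Type} [Fintype V] (H : Dgraph V)
    (helder : H.Elder) (hconn : H.Connected) :
    ∃ (T : V → V → Prop) (r : V), IsVineyard H T r := by
  classical
  obtain ⟨r⟩ := hconn.1
  obtain ⟨T, r', h⟩ := (H.partialVineyard_singleton r).exists_univ helder hconn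
  exact ⟨T, r', h.isVineyard⟩
end

section
/- Let H and G be graphs with edges colored by {1,…,k}, let h ≥ 0 be an integer, let φ: V(H) → V(G) be a homomorphism, and let G' be an h-th augmentation of G. Then there exists a directed graph H' obtained from an h-th augmentation of H by recoloring zeros such that for every edge (u,v) ∈ E(H'): if φ(u) ≠ φ(v), then (φ(u),φ(v)) ∈ E(G') and the edge (u,v) has the same color as (φ(u),φ(v)); and if φ(u) = φ(v), then the color of (u,v) is 0. -/
/-- A graph on vertex type `V` with edges colored by colors `{1, …, k}`
(represented by `Fin k`): `col u v = some c` means `uv` is an edge of color `c`. -/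
structure EColGraph (V : Type) (k : ℕ) where
  col : V → V → Option (Fin k)
  symm : ∀ u v, col u v = col v u
  irrefl : ∀ v, col v v = none

/-- A directed graph with edges colored by colors `{0, 1, …, k}` (represented by
`Fin (k+1)`, the color `i` of an original edge being represented by `Fin.succ`
and the new color `0` by `0`): edges join distinct vertices and no pair of vertices
is joined in both directions. -/
structure CDigraph (V : Type) (k : ℕ) where
  col : V → V → Option (Fin (k + 1))
  irrefl : ∀ v, col v v = none
  asym : ∀ u v, (col u v).isSome → col v u = none

/-- Two distinct non-adjacent vertices `u`, `v` of a colored directed graph (given by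
its coloring function `f`) form a fork if there is `w` with edges `(u,w)`, `(v,w)`. -/
def QFork {A : Type} {k : ℕ} (f : A → A → Option (Fin (k + 1))) (u v : A) : Prop :=
  u ≠ v ∧ f u v = none ∧ f v u = none ∧ ∃ w, (f u w).isSome ∧ (f v w).isSome

/-- `D` is an orientation of the edge-colored graph `G`; each edge keeps its color
(color `c` of `G` is represented by `Fin.succ c` in `D`). -/
def IsOrientation {V : Type} {k : ℕ} (G : EColGraph V k) (D : CDigraph V k) : Prop :=
  (∀ u v c, D.col u v = some c → ∃ c' : Fin k, c = Fin.succ c' ∧ G.col u v = some c') ∧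
  (∀ u v (c : Fin k), G.col u v = some c →
    D.col u v = some (Fin.succ c) ∨ D.col v u = some (Fin.succ c))

/-- `D'` is a fraternal augmentation of `D`: for every fork `u,v` of `D`, exactly one
of the edges `(u,v)`, `(v,u)` is added with the new color `0`, and no other edges are
added or changed. -/
def IsFraternalAug {V : Type} {k : ℕ} (D D' : CDigraph V k) : Prop :=
  (∀ u v c, D.col u v = some c → D'.col u v = some c) ∧
  (∀ u v, QFork D.col u v → D'.col u v = some 0 ∨ D'.col v u = some 0) ∧
  (∀ u v c, D'.col u v = some c →
    D.col u v = some c ∨ ((QFork D.col u v ∨ QFork D.col v u) ∧ c = 0))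

/-- `IsAug G h D`: `D` is an `h`-th augmentation of `G`, i.e. it is obtained from an
orientation of `G` by iterating fraternal augmentation `h` times. -/
def IsAug {V : Type} {k : ℕ} (G : EColGraph V k) : ℕ → CDigraph V k → Prop
  | 0, D => IsOrientation G D
  | n + 1, D => ∃ D', IsAug G n D' ∧ IsFraternalAug D' D

/-- `D'` is obtained from `D` by recoloring zeros: they differ only in the colors of
edges whose color in `D` is `0`. -/
def RecolorZeros {V : Type} {k : ℕ} (D D' : CDigraph V k) : Prop :=
  ∀ u v, D'.col u v = D.col u v ∨ (D.col u v = some 0 ∧ (D'.col u v).isSome)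

/-- A homomorphism of edge-colored (undirected) graphs. -/
def IsHom {V W : Type} {k : ℕ} (H : EColGraph V k) (G : EColGraph W k)
    (φ : V → W) : Prop :=
  ∀ u v c, H.col u v = some c → G.col (φ u) (φ v) = some c

/-!
Induction on `h`, carrying the invariant that the augmentation of `H` lies over that of `G`
along `φ`: edges contracted by `φ` have color `0`, and every other edge maps to an edge of the
augmentation of `G`, of the same color unless its own color is `0`. If `u, v` is a fork of the
augmentation of `H` with common out-neighbour `w`, then `φ u, φ v` are joined already or form a
fork through `φ w` (or `φ w` is one of them), so they are joined in the next augmentation of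
`G`; the new edge between `u` and `v` is oriented like that one. At the end, each non-contracted
edge of color `0` is given the color of its image.
-/

section

variable {V W : Type} {k : ℕ}

theorem QFork.symm {A : Type} {f : A → A → Option (Fin (k + 1))} {u v : A}
    (h : QFork f u v) : QFork f v u :=
  let ⟨hne, huv, hvu, w, hu, hv⟩ := h
  ⟨hne.symm, hvu, huv, w, hv, hu⟩

namespace IsFraternalAug

variable {D D' : CDigraph V k}

theorem isSome_col (hD : IsFraternalAug D D') {u v : V} (huv : (D.col u v).isSome) :
    (D'.col u v).isSome := by
  obtain ⟨c, hc⟩ := Option.isSome_iff_exists.mp huv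
  simp [hD.1 u v c hc]

theorem joined_of_common_target (hD : IsFraternalAug D D') {x y w : V} (hxy : x ≠ y)
    (hx : x = w ∨ (D.col x w).isSome) (hy : y = w ∨ (D.col y w).isSome) :
    (D'.col x y).isSome ∨ (D'.col y x).isSome := by
  rcases hx with rfl | hx
  · exact .inr (hD.isSome_col (hy.resolve_left hxy.symm))
  rcases hy with rfl | hy
  · exact .inl (hD.isSome_col hx)
  by_cases hxy' : (D.col x y).isSome
  · exact .inl (hD.isSome_col hxy')
  by_cases hyx' : (D.col y x).isSome
  · exact .inr (hD.isSome_col hyx')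
  have hfork : QFork D.col x y := by
    simp only [Bool.not_eq_true, Option.isSome_eq_false_iff, Option.isNone_iff_eq_none] at hxy' hyx'
    exact ⟨hxy, hxy', hyx', w, hx, hy⟩
  rcases hD.2.1 x y hfork with h | h <;> simp [h]

end IsFraternalAug

namespace CDigraph

open Classical in
noncomputable def addForks (D : CDigraph V k) (P : V → V → Prop) (hP : ∀ u v, P u v → ¬P v u) :
    CDigraph V k where
  col u v := if QFork D.col u v ∧ P u v then some 0 else D.col u v
  irrefl v := by simp [QFork, D.irrefl]
  asym u v huv := by
    have hvu : D.col v u = none := by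
      split_ifs at huv with h
      exacts [h.1.2.2.1, D.asym u v huv]
    have hnot : ¬(QFork D.col v u ∧ P v u) := by
      rintro ⟨hfork, hPvu⟩
      split_ifs at huv with h
      · exact hP u v h.2 hPvu
      · simp [hfork.2.2.1] at huv
    simp only [if_neg hnot, hvu]

theorem isFraternalAug_addForks (D : CDigraph V k) {P : V → V → Prop}
    (hP : ∀ u v, P u v → ¬P v u) (htot : ∀ u v, QFork D.col u v → P u v ∨ P v u) :
    IsFraternalAug D (D.addForks P hP) := by
  refine ⟨fun u v c huv => ?_, fun u v hfork => ?_, fun u v c huv => ?_⟩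
  · have : ¬QFork D.col u v := fun h => by simp [h.2.1] at huv
    simp [addForks, this, huv]
  · rcases htot u v hfork with h | h
    · simp [addForks, hfork, h]
    · simp [addForks, hfork.symm, h]
  · simp only [addForks] at huv
    split_ifs at huv with h
    · exact .inr ⟨.inl h.1, (Option.some_injective _ huv).symm⟩
    · exact .inl huv

end CDigraph

def LiesOver (φ : V → W) (D : CDigraph V k) (Gd : CDigraph W k) : Prop :=
  ∀ u v c, D.col u v = some c → (φ u = φ v → c = 0) ∧
    (φ u ≠ φ v → (Gd.col (φ u) (φ v)).isSome ∧ (c ≠ 0 → Gd.col (φ u) (φ v) = some c))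

namespace LiesOver

variable {φ : V → W} {D : CDigraph V k} {Gd Gd' : CDigraph W k}

theorem eq_or_isSome (hD : LiesOver φ D Gd) {u v : V} (huv : (D.col u v).isSome) :
    φ u = φ v ∨ (Gd.col (φ u) (φ v)).isSome := by
  obtain ⟨c, hc⟩ := Option.isSome_iff_exists.mp huv
  exact or_iff_not_imp_left.mpr fun hne => ((hD u v c hc).2 hne).1

theorem mono (hD : LiesOver φ D Gd) (hG : IsFraternalAug Gd Gd') : LiesOver φ D Gd' := by
  intro u v c huv
  refine ⟨(hD u v c huv).1, fun hne => ?_⟩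
  obtain ⟨hsome, hcol⟩ := (hD u v c huv).2 hne
  exact ⟨hG.isSome_col hsome, fun hc => hG.1 _ _ _ (hcol hc)⟩

theorem joined_of_qFork (hD : LiesOver φ D Gd) (hG : IsFraternalAug Gd Gd') {u v : V}
    (hfork : QFork D.col u v) (hne : φ u ≠ φ v) :
    (Gd'.col (φ u) (φ v)).isSome ∨ (Gd'.col (φ v) (φ u)).isSome := by
  obtain ⟨-, -, -, w, hu, hv⟩ := hfork
  exact hG.joined_of_common_target hne (hD.eq_or_isSome hu) (hD.eq_or_isSome hv)

/-- A fork whose ends `φ` identifies is oriented by a well-order of `V`; any other fork is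
oriented as its image, which is joined in `Gd'`. -/
theorem exists_isFraternalAug (hD : LiesOver φ D Gd) (hG : IsFraternalAug Gd Gd') :
    ∃ D', IsFraternalAug D D' ∧ LiesOver φ D' Gd' := by
  classical
  let P : V → V → Prop := fun u v =>
    if φ u = φ v then WellOrderingRel u v else (Gd'.col (φ u) (φ v)).isSome
  have hP : ∀ u v, P u v → ¬P v u := by
    intro u v huv hvu
    by_cases h : φ u = φ v
    · simp only [P, h, if_true] at huv hvu
      exact asymm huv hvu
    · simp only [P, h, Ne.symm h, if_false] at huv hvu
      simp [Gd'.asym _ _ huv] at hvu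
  have htot : ∀ u v, QFork D.col u v → P u v ∨ P v u := by
    intro u v hfork
    by_cases h : φ u = φ v
    · simp only [P, h, if_true]
      exact (trichotomous_of WellOrderingRel u v).imp_right (Or.resolve_left · hfork.1)
    · simpa [P, h, Ne.symm h] using hD.joined_of_qFork hG hfork h
  refine ⟨D.addForks P hP, D.isFraternalAug_addForks hP htot, fun u v c huv => ?_⟩
  simp only [CDigraph.addForks] at huv
  split_ifs at huv with hnew
  · cases huv
    refine ⟨fun _ => rfl, fun hne => ⟨?_, fun h => absurd rfl h⟩⟩
    simpa [P, hne] using hnew.2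
  · exact hD.mono hG u v c huv

end LiesOver

open Classical in
noncomputable def EColGraph.pullbackOrientation (H : EColGraph V k) (φ : V → W)
    (G₀ : CDigraph W k) : CDigraph V k where
  col u v := if G₀.col (φ u) (φ v) = (H.col u v).map Fin.succ then (H.col u v).map Fin.succ
    else none
  irrefl v := by simp [H.irrefl]
  asym u v huv := by
    obtain ⟨c, hc⟩ := Option.isSome_iff_exists.mp huv
    split_ifs at hc with h
    rw [H.symm v u]
    have hGvu : G₀.col (φ v) (φ u) = none := G₀.asym _ _ (by simp [h, hc])
    simp [hGvu]

theorem exists_isOrientation_liesOver {H : EColGraph V k} {G : EColGraph W k} {φ : V → W}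
    (hφ : IsHom H G φ) {G₀ : CDigraph W k} (hG₀ : IsOrientation G G₀) :
    ∃ D, IsOrientation H D ∧ LiesOver φ D G₀ := by
  classical
  have hcol : ∀ u v c, (H.pullbackOrientation φ G₀).col u v = some c →
      ∃ c', c = c'.succ ∧ H.col u v = some c' ∧ G₀.col (φ u) (φ v) = some c := by
    intro u v c huv
    simp only [EColGraph.pullbackOrientation] at huv
    split_ifs at huv with h
    obtain ⟨c', hc', rfl⟩ := Option.map_eq_some_iff.mp huv
    exact ⟨c', rfl, hc', by rw [h, hc', Option.map_some]⟩
  refine ⟨H.pullbackOrientation φ G₀, ⟨fun u v c huv => ?_, fun u v c huv => ?_⟩,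
    fun u v c huv => ?_⟩
  · obtain ⟨c', rfl, hc', -⟩ := hcol u v c huv
    exact ⟨c', rfl, hc'⟩
  · have hvu : H.col v u = some c := by rw [H.symm]; exact huv
    rcases hG₀.2 _ _ c (hφ u v c huv) with h | h
    · exact .inl (by simp [EColGraph.pullbackOrientation, huv, h])
    · exact .inr (by simp [EColGraph.pullbackOrientation, hvu, h])
  · obtain ⟨c', rfl, hc', hG⟩ := hcol u v c huv
    have hne : φ u ≠ φ v := fun h => by simpa [h, G.irrefl] using hφ u v c' hc'
    exact ⟨fun h => absurd h hne, fun _ => ⟨by simp [hG], fun _ => hG⟩⟩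

theorem exists_isAug_liesOver {H : EColGraph V k} {G : EColGraph W k} {φ : V → W}
    (hφ : IsHom H G φ) : ∀ (n : ℕ) (Gn : CDigraph W k), IsAug G n Gn →
      ∃ D, IsAug H n D ∧ LiesOver φ D Gn
  | 0, _, hG => exists_isOrientation_liesOver hφ hG
  | n + 1, _, ⟨Gp, hGp, hG⟩ => by
    obtain ⟨D, hD, hDG⟩ := exists_isAug_liesOver hφ n Gp hGp
    obtain ⟨D', hDD', hD'G⟩ := hDG.exists_isFraternalAug hG
    exact ⟨D', ⟨D, hD, hDD'⟩, hD'G⟩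

open Classical in
noncomputable def CDigraph.recolorZerosFrom (D : CDigraph V k) (φ : V → W) (Gd : CDigraph W k) :
    CDigraph V k where
  col u v := if D.col u v = some 0 ∧ φ u ≠ φ v then Gd.col (φ u) (φ v) else D.col u v
  irrefl v := by simp [D.irrefl]
  asym u v huv := by
    have hvu : D.col v u = none := by
      split_ifs at huv with h
      exacts [D.asym u v (by simp [h.1]), D.asym u v huv]
    simp [hvu]

theorem LiesOver.recolorZerosFrom {φ : V → W} {D : CDigraph V k} {Gd : CDigraph W k}
    (hD : LiesOver φ D Gd) :
    RecolorZeros D (D.recolorZerosFrom φ Gd) ∧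
      ∀ u v c, (D.recolorZerosFrom φ Gd).col u v = some c →
        (φ u ≠ φ v → Gd.col (φ u) (φ v) = some c) ∧ (φ u = φ v → c = 0) := by
  refine ⟨fun u v => ?_, fun u v c huv => ?_⟩
  · simp only [CDigraph.recolorZerosFrom]
    split_ifs with h
    · exact .inr ⟨h.1, ((hD u v 0 h.1).2 h.2).1⟩
    · exact .inl rfl
  · simp only [CDigraph.recolorZerosFrom] at huv
    split_ifs at huv with h
    · exact ⟨fun _ => huv, fun h' => absurd h' h.2⟩
    · exact ⟨fun hne => ((hD u v c huv).2 hne).2 fun hc => h ⟨hc ▸ huv, hne⟩,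
        (hD u v c huv).1⟩

end

theorem hom_lifts_to_augmentation_general {V W : Type} {k : ℕ}
    (H : EColGraph V k) (G : EColGraph W k) (h : ℕ)
    (φ : V → W) (hφ : IsHom H G φ)
    (G' : CDigraph W k) (hG' : IsAug G h G') :
    ∃ H₀ H' : CDigraph V k, IsAug H h H₀ ∧ RecolorZeros H₀ H' ∧
      ∀ u v c, H'.col u v = some c →
        (φ u ≠ φ v → G'.col (φ u) (φ v) = some c) ∧ (φ u = φ v → c = 0) := by
  obtain ⟨H₀, hH₀, hlies⟩ := exists_isAug_liesOver hφ h G' hG'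
  exact ⟨H₀, _, hH₀, hlies.recolorZerosFrom⟩

/-- Let `φ : V(H) → V(G)` be a homomorphism of graphs with edges colored by `{1,…,k}`
and let `G'` be an `h`-th augmentation of `G`.  Then there is a graph `H'` obtained
from an `h`-th augmentation of `H` by recoloring zeros such that for every edge
`(u,v)` of `H'`: if `φ(u) ≠ φ(v)` then `(φ(u),φ(v))` is an edge of `G'` of the same
color, and if `φ(u) = φ(v)` then `(u,v)` has color `0`. -/
theorem hom_lifts_to_augmentation {V W : Type} [Fintype V] [Fintype W] {k : ℕ}
    (H : EColGraph V k) (G : EColGraph W k) (h : ℕ)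
    (φ : V → W) (hφ : IsHom H G φ)
    (G' : CDigraph W k) (hG' : IsAug G h G') :
    ∃ H₀ H' : CDigraph V k, IsAug H h H₀ ∧ RecolorZeros H₀ H' ∧
      ∀ u v c, H'.col u v = some c →
        (φ u ≠ φ v → G'.col (φ u) (φ v) = some c) ∧ (φ u = φ v → c = 0) :=
  hom_lifts_to_augmentation_general H G h φ hφ G' hG'
end

section
/- If H is an elder graph with edges colored by {0,1,…,k} and H' is a 0-contraction of H, then H' is an elder graph. -/
/-- A partition `P` of the vertices of `D` is `0`-admissible: each part induces a
connected subgraph all of whose edges have color `0`, between two distinct parts all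
edges go in the same direction, and they all have the same color. -/
def ZeroAdmissible {V : Type} {k : ℕ} (D : CDigraph V k) (P : Setoid V) : Prop :=
  (∀ u v, P.r u v → ∀ c, D.col u v = some c → c = 0) ∧
  (∀ u v, P.r u v → Relation.ReflTransGen
      (fun a b => P.r a u ∧ P.r b u ∧ ((D.col a b).isSome ∨ (D.col b a).isSome)) u v) ∧
  (∀ u u' v v', P.r u u' → P.r v v' → ¬ P.r u v → (D.col u v).isSome → D.col v' u' = none) ∧
  (∀ u u' v v' c c', P.r u u' → P.r v v' → ¬ P.r u v →
    D.col u v = some c → D.col u' v' = some c' → c' = c)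

open Classical in
/-- The coloring of the `0`-contraction of `D` corresponding to a partition `P`:
distinct parts `a`, `b` are joined by an edge of color `c` iff some pair of their
members is joined in `D` by an edge of color `c`. -/
noncomputable def qcol {V : Type} {k : ℕ} (D : CDigraph V k) (P : Setoid V) :
    Quotient P → Quotient P → Option (Fin (k + 1)) :=
  fun a b =>
    if h : a ≠ b ∧ ∃ c u v, Quotient.mk P u = a ∧ Quotient.mk P v = b ∧ D.col u v = some c
    then some h.2.choose else none

/-- Auxiliary: `z` is forward-reachable within the part of `x` from a vertex hit
from the part `a`. -/
def SPred {V : Type} {k : ℕ} (D : CDigraph V k) (P : Setoid V) (a : Quotient P) (x : V)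
    (z : V) : Prop :=
  ∃ s u', Quotient.mk P u' = a ∧ (D.col u' s).isSome ∧ P.r s x ∧
    Relation.ReflTransGen (fun p q => P.r p x ∧ P.r q x ∧ (D.col p q).isSome) s z

section Aux
variable {V : Type} {k : ℕ} (D : CDigraph V k) (P : Setoid V)
  (helder : ∀ u v, ¬ QFork D.col u v)
  (hP3 : ∀ u u' v v', P.r u u' → P.r v v' → ¬ P.r u v → (D.col u v).isSome → D.col v' u' = none)
  {a : Quotient P} {x : V} (hxw : Quotient.mk P x ≠ a)

include helder in
/-- No fork: if `p` and `q` are distinct and both point to `z`, they are adjacent. -/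
lemma noFork_adj (p q z : V) (hpq : p ≠ q) (hp : (D.col p z).isSome)
    (hq : (D.col q z).isSome) : (D.col p q).isSome ∨ (D.col q p).isSome := by
  by_contra h
  push_neg at h
  exact helder p q ⟨hpq, Option.not_isSome_iff_eq_none.1 h.1,
    Option.not_isSome_iff_eq_none.1 h.2, z, hp, hq⟩

include helder hP3 hxw in
/-- `SPred` is closed under taking predecessors inside the part of `x`. -/
lemma SPred.pred {z : V} (hz : SPred D P a x z) :
    ∀ z', P.r z' x → (D.col z' z).isSome → SPred D P a x z' := by
  obtain ⟨s, u', hu', hus, hsx, hchain⟩ := hz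
  induction hchain with
  | refl =>
    intro z' hz'x hz'z
    have hne : u' ≠ z' := by
      intro h
      apply hxw
      rw [← hu', h]
      exact (Quotient.sound hz'x).symm
    have hnr : ¬ P.r u' s := by
      intro h
      apply hxw
      rw [← hu']
      exact Quotient.sound (P.iseqv.symm (P.iseqv.trans h hsx))
    have h1 : D.col z' u' = none := hP3 u' u' s z' (P.iseqv.refl u')
      (P.iseqv.trans hsx (P.iseqv.symm hz'x)) hnr hus
    rcases noFork_adj D helder u' z' s hne hus hz'z with h | h
    · exact ⟨z', u', hu', h, hz'x, Relation.ReflTransGen.refl⟩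
    · rw [h1] at h; simp at h
  | @tail p z hsp hpz ih =>
    intro z' hz'x hz'z
    by_cases hpz' : p = z'
    · subst hpz'
      exact ⟨s, u', hu', hus, hsx, hsp⟩
    · rcases noFork_adj D helder p z' z hpz' hpz.2.2 hz'z with h | h
      · exact ⟨s, u', hu', hus, hsx, hsp.tail ⟨hpz.1, hz'x, h⟩⟩
      · exact ih z' hz'x h

include helder hP3 in
/-- A vertex in `SPred` cannot also be hit from a third part `b`. -/
lemma SPred.noB {b : Quotient P} (hab : b ≠ a) (hba : ∀ u' v', Quotient.mk P u' = a →
      Quotient.mk P v' = b → D.col u' v' = none ∧ D.col v' u' = none)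
    (hbw : Quotient.mk P x ≠ b)
    {z : V} (hz : SPred D P a x z) :
    ∀ v', Quotient.mk P v' = b → (D.col v' z).isSome → False := by
  obtain ⟨s, u', hu', hus, hsx, hchain⟩ := hz
  induction hchain with
  | refl =>
    intro v' hv' hv's
    have hne : u' ≠ v' := by
      intro h
      rw [h, hv'] at hu'
      exact hab hu'
    obtain ⟨h1, h2⟩ := hba u' v' hu' hv'
    exact helder u' v' ⟨hne, h1, h2, s, hus, hv's⟩
  | @tail p z hsp hpz ih =>
    intro v' hv' hv'z
    have hne : p ≠ v' := by
      intro h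
      apply hbw
      rw [← hv', ← h]
      exact (Quotient.sound hpz.1).symm
    rcases noFork_adj D helder p v' z hne hpz.2.2 hv'z with h | h
    · have hnr : ¬ P.r v' z := by
        intro hr
        apply hbw
        rw [← hv']
        exact (Quotient.sound (P.iseqv.trans hr hpz.2.1)).symm
      have : D.col p v' = none := hP3 v' v' z p (P.iseqv.refl v')
        (P.iseqv.trans hpz.2.1 (P.iseqv.symm hpz.1)) hnr hv'z
      rw [this] at h; simp at h
    · exact ih v' hv' h

end Aux

/-- If `H` is an elder graph with edges colored by `{0,1,…,k}` and `H'` is a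
`0`-contraction of `H` (corresponding to a `0`-admissible partition `P`), then `H'`
is an elder graph. -/

theorem zero_contraction_elder {V : Type} [Fintype V] {k : ℕ} (D : CDigraph V k)
    (helder : ∀ u v, ¬ QFork D.col u v)
    (P : Setoid V) (hP : ZeroAdmissible D P) :
    ∀ a b : Quotient P, ¬ QFork (qcol D P) a b := by
  intro a b hfork
  obtain ⟨hab, hnab, hnba, w, hwa, hwb⟩ := hfork
  obtain ⟨hP1, hP2, hP3, hP4⟩ := hP
  have none_of : ∀ (p q : Quotient P), qcol D P p q = none → p ≠ q →
      ∀ u' v', Quotient.mk P u' = p → Quotient.mk P v' = q → D.col u' v' = none := by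
    intro p q hnone hpq u' v' hu hv
    cases hc : D.col u' v' with
    | none => rfl
    | some c =>
      exfalso
      have : qcol D P p q ≠ none := by
        unfold qcol
        rw [dif_pos ⟨hpq, c, u', v', hu, hv, hc⟩]
        simp
      exact this hnone
  have exw : ∀ (p : Quotient P), (qcol D P p w).isSome →
      p ≠ w ∧ ∃ u v, Quotient.mk P u = p ∧ Quotient.mk P v = w ∧ (D.col u v).isSome := by
    intro p hp
    unfold qcol at hp
    by_cases h : p ≠ w ∧ ∃ c u v, Quotient.mk P u = p ∧ Quotient.mk P v = w ∧
        D.col u v = some c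
    · obtain ⟨h1, c, u, v, hu, hv, hc⟩ := h
      exact ⟨h1, u, v, hu, hv, by rw [hc]; rfl⟩
    · rw [dif_neg h] at hp
      simp at hp
  obtain ⟨haw, u, x, hua, hxw, hux⟩ := exw a hwa
  obtain ⟨hbw, v, y, hvb, hyw, hvy⟩ := exw b hwb
  have hxa : Quotient.mk P x ≠ a := by rw [hxw]; exact Ne.symm haw
  have hxb : Quotient.mk P x ≠ b := by rw [hxw]; exact Ne.symm hbw
  have hSx : SPred D P a x x := ⟨x, u, hua, hux, P.iseqv.refl x, Relation.ReflTransGen.refl⟩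
  have hxy : P.r x y := Quotient.exact (by rw [hxw, hyw])
  have hconn := hP2 x y hxy
  have key : ∀ z, Relation.ReflTransGen
      (fun a' b' => P.r a' x ∧ P.r b' x ∧ ((D.col a' b').isSome ∨ (D.col b' a').isSome))
      x z → SPred D P a x z := by
    intro z hz
    induction hz with
    | refl => exact hSx
    | @tail p q hxp hpq ih =>
      rcases hpq.2.2 with h | h
      · obtain ⟨s, u', h1, h2, h3, hch⟩ := ih
        exact ⟨s, u', h1, h2, h3, hch.tail ⟨hpq.1, hpq.2.1, h⟩⟩
      · exact SPred.pred D P helder hP3 hxa ih q hpq.2.1 h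
  have hSy : SPred D P a x y := key y hconn
  exact SPred.noB D P helder hP3 (Ne.symm hab)
    (fun u' v' h1 h2 => ⟨none_of a b hnab hab u' v' h1 h2,
      none_of b a hnba (Ne.symm hab) v' u' h2 h1⟩) hxb hSy v hvb hvy
end

section
/- Let (H,T) be an elder vineyard. For every vertex v ∈ V(H), the set N^+_∞(v) of vertices reachable from v by a directed path in H is a clan. -/
private def relPow {V : Type} (T : V → V → Prop) : ℕ → V → V → Prop
  | 0 => fun a b => a = b
  | n+1 => fun a c => ∃ b, T a b ∧ relPow T n b c

private lemma relPow_tail {V : Type} {T : V → V → Prop} :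
    ∀ {n : ℕ} {a b c : V}, relPow T n a b → T b c → relPow T (n+1) a c := by
  intro n
  induction n with
  | zero => intro a b c h h2; exact ⟨c, h ▸ h2, rfl⟩
  | succ m ih =>
      rintro a b c ⟨x, hx, hp⟩ h2
      exact ⟨x, hx, ih hp h2⟩

private lemma relPow_succ_right {V : Type} {T : V → V → Prop} :
    ∀ {n : ℕ} {a c : V}, relPow T (n+1) a c → ∃ b, relPow T n a b ∧ T b c := by
  intro n
  induction n with
  | zero => rintro a c ⟨b, hb, hbc⟩; exact ⟨a, rfl, hbc ▸ hb⟩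
  | succ m ih =>
      rintro a c ⟨x, hx, hp⟩
      obtain ⟨b, hb, hbc⟩ := ih hp
      exact ⟨b, ⟨x, hx, hb⟩, hbc⟩

private lemma rtg_relPow {V : Type} {T : V → V → Prop} {a b : V}
    (h : Relation.ReflTransGen T a b) : ∃ n, relPow T n a b := by
  induction h with
  | refl => exact ⟨0, rfl⟩
  | tail _ h2 ih => obtain ⟨n, hn⟩ := ih; exact ⟨n+1, relPow_tail hn h2⟩



/-- The subgraph of `T` induced by the set `C` is an outbranching with root `rc`. -/
def OutbranchingOn {V : Type} (T : V → V → Prop) (C : Set V) (rc : V) : Prop :=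
  rc ∈ C ∧
  (∀ v ∈ C, Relation.ReflTransGen (fun a b => a ∈ C ∧ b ∈ C ∧ T a b) rc v) ∧
  (∀ u ∈ C, ¬ T u rc) ∧
  (∀ v ∈ C, v ≠ rc → ∃! u, u ∈ C ∧ T u v)

/-- `C` is a clan of the vineyard `(H,T)` with root `rc`: `N^+_1(C) = C` in `H`
(i.e. `C` is closed under out-edges of `H`) and the subgraph of `T` induced by `C`
is an outbranching rooted at `rc`. -/
def IsClanRoot {V : Type} (H : Dgraph V) (T : V → V → Prop) (C : Set V) (rc : V) : Prop :=
  (∀ u ∈ C, ∀ v, H.adj u v → v ∈ C) ∧ OutbranchingOn T C rc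

/-- In an elder vineyard `(H,T)`, for every vertex `v`, the set `N^+_∞(v)` of vertices
reachable from `v` by a directed path in `H` is a clan. -/
theorem reachSet_isClan {V : Type} [Fintype V] (H : Dgraph V) (T : V → V → Prop) (r : V)
    (helder : H.Elder) (hvine : IsVineyard H T r) (v : V) :
    ∃ rc, IsClanRoot H T {u | Relation.ReflTransGen H.adj v u} rc := by

  classical
  obtain ⟨⟨hreach, hnoR, hpar⟩, hTH, hcomp⟩ := hvine
  -- depth function
  have hex : ∀ x, ∃ n, relPow T n r x := fun x => rtg_relPow (hreach x)
  set d : V → ℕ := fun x => Nat.find (hex x) with hd_def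
  have hd : ∀ x, relPow T (d x) r x := fun x => Nat.find_spec (hex x)
  -- each T-edge increases depth by exactly one
  have hedge : ∀ u w, T u w → d w = d u + 1 := by
    intro u w h
    have hwr : w ≠ r := fun e => hnoR u (e ▸ h)
    have le1 : d w ≤ d u + 1 := Nat.find_le (relPow_tail (hd u) h)
    have ge1 : d u + 1 ≤ d w := by
      rcases hm : d w with _ | m
      · exfalso
        have h0 : relPow T 0 r w := hm ▸ hd w
        exact hwr (h0.symm)
      · have hsucc : relPow T (m+1) r w := hm ▸ hd w
        obtain ⟨x, hx, hxw⟩ := relPow_succ_right hsucc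
        obtain ⟨p, _, hup⟩ := hpar w hwr
        have hxu : x = u := (hup x hxw).trans (hup u h).symm
        have : d u ≤ m := Nat.find_le (hxu ▸ hx)
        omega
    omega
  -- depth is monotone along T-paths
  have hmono : ∀ {a b : V}, Relation.ReflTransGen T a b → d a ≤ d b := by
    intro a b h
    induction h with
    | refl => exact le_rfl
    | tail _ h2 ih => have := hedge _ _ h2; omega
  -- antisymmetry of the tree order
  have hanti : ∀ {a b : V}, Relation.ReflTransGen T a b →
      Relation.ReflTransGen T b a → a = b := by
    intro a b h1 h2
    rcases Relation.ReflTransGen.cases_tail h1 with heq | ⟨c, hac, hcb⟩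
    · exact heq.symm
    · exfalso
      have e1 := hedge _ _ hcb
      have e2 := hmono hac
      have e3 := hmono h2
      omega
  -- two T-ancestors of the same vertex are comparable
  have hcmp : ∀ a u, Relation.ReflTransGen T a u → ∀ b, Relation.ReflTransGen T b u →
      Relation.ReflTransGen T a b ∨ Relation.ReflTransGen T b a := by
    intro a u h
    induction h with
    | refl => exact fun b hb => Or.inr hb
    | @tail c u' hac hcu ih =>
        intro b hbu
        rcases Relation.ReflTransGen.cases_tail hbu with heq | ⟨e, hbe, heu⟩
        · exact Or.inl (heq ▸ (hac.tail hcu))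
        · have hur : u' ≠ r := fun h => hnoR c (h ▸ hcu)
          obtain ⟨p, _, hup⟩ := hpar u' hur
          have : e = c := (hup e heu).trans (hup c hcu).symm
          exact ih b (this ▸ hbe)
  -- choose rc : depth-minimal element of C among T-ancestors of v
  have hvS : ∃ n, ∃ x, (Relation.ReflTransGen H.adj v x ∧ Relation.ReflTransGen T x v)
      ∧ d x = n := ⟨d v, v, ⟨Relation.ReflTransGen.refl, Relation.ReflTransGen.refl⟩, rfl⟩
  obtain ⟨rc, hrcS, hrcd⟩ := Nat.find_spec hvS
  have hrcmin : ∀ x, Relation.ReflTransGen H.adj v x → Relation.ReflTransGen T x v →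
      d rc ≤ d x := by
    intro x h1 h2
    have : Nat.find hvS ≤ d x := Nat.find_min' hvS ⟨x, ⟨h1, h2⟩, rfl⟩
    omega
  -- rc is a T-ancestor of every element of C
  have hmin : ∀ u, Relation.ReflTransGen H.adj v u → Relation.ReflTransGen T rc u := by
    intro u hu
    induction hu with
    | refl => exact hrcS.2
    | @tail b w hvb hbw ih =>
        rcases hcomp b w hbw with hbw' | hwb
        · exact ih.trans hbw'
        · rcases hcmp rc b ih w hwb with h1 | h2
          · exact h1
          · have hwC : Relation.ReflTransGen H.adj v w := hvb.tail hbw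
            have hle : d rc ≤ d w := hrcmin w hwC (h2.trans hrcS.2)
            have hge : d w ≤ d rc := hmono h2
            have : w = rc := by
              rcases Relation.ReflTransGen.cases_tail h2 with heq | ⟨c, hwc, hcrc⟩
              · exact heq.symm
              · exfalso
                have e1 := hedge _ _ hcrc
                have e2 := hmono hwc
                omega
            exact this ▸ Relation.ReflTransGen.refl
  -- every T-descendant of rc is in C
  have hdesc : ∀ x, Relation.ReflTransGen T rc x → Relation.ReflTransGen H.adj v x := by
    intro x h
    induction h with
    | refl => exact hrcS.1
    | tail _ h2 ih => exact ih.tail (hTH _ _ h2)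
  refine ⟨rc, ?_, hrcS.1, ?_, ?_, ?_⟩
  · intro u hu w hw
    exact Relation.ReflTransGen.tail hu hw
  · intro u hu
    have h := hmin u hu
    clear hu
    induction h with
    | refl => exact Relation.ReflTransGen.refl
    | @tail b c h1 h2 ih =>
        exact ih.tail ⟨hdesc b h1, hdesc c (h1.tail h2), h2⟩
  · intro u hu hT
    have h1 := hmin u hu
    have h2 : Relation.ReflTransGen T u rc := Relation.ReflTransGen.single hT
    have heq : u = rc := hanti h2 h1
    subst heq
    exact H.asym u u (hTH u u hT) (hTH u u hT)
  · intro u hu hne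
    have h := hmin u hu
    rcases Relation.ReflTransGen.cases_tail h with heq | ⟨c, hrcc, hcu⟩
    · exact absurd heq hne
    · have hur : u ≠ r := fun e => hnoR c (e ▸ hcu)
      obtain ⟨p, _, hup⟩ := hpar u hur
      refine ⟨c, ⟨hdesc c hrcc, hcu⟩, ?_⟩
      rintro w ⟨_, hwT⟩
      exact (hup w hwT).trans (hup c hcu).symm
end

section
/- Let (H,T) be an elder vineyard and let C be a clan with root r(C). The ghosts of C are exactly the vertices of N^-_1(r(C)) \ C, i.e., N^-_1(C) \ C = N^-_1(r(C)) \ C. -/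
/-- In an elder vineyard `(H,T)`, the ghosts of a clan `C` (the vertices of
`N^-_1(C) \ C`) are exactly the vertices of `N^-_1(r(C)) \ C`. -/
theorem ghosts_eq {V : Type} [Fintype V] (H : Dgraph V) (T : V → V → Prop) (r : V)
    (helder : H.Elder) (hvine : IsVineyard H T r)
    (C : Set V) (rc : V) (hclan : IsClanRoot H T C rc) :
    {u | u ∉ C ∧ ∃ w ∈ C, H.adj u w} = {u | u ∉ C ∧ H.adj u rc} := by
  obtain ⟨hclosed, hrcC, hreach, -, -⟩ := hclan
  obtain ⟨-, hTtoH, -⟩ := hvine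
  ext u
  simp only [Set.mem_setOf_eq]
  constructor
  · rintro ⟨huC, w, hwC, huw⟩
    refine ⟨huC, ?_⟩
    have key : ∀ w, Relation.ReflTransGen (fun a b => a ∈ C ∧ b ∈ C ∧ T a b) rc w →
        H.adj u w → H.adj u rc := by
      intro w hpath
      induction hpath with
      | refl => exact id
      | tail _ hstep ih =>
        rename_i p w' _
        intro huw'
        obtain ⟨hpC, hw'C, hTpw⟩ := hstep
        have hadj_pw : H.adj p w' := hTtoH p w' hTpw
        have hune : u ≠ p := fun h => huC (h ▸ hpC)
        have hnpu : ¬ H.adj p u := fun h => huC (hclosed p hpC u h)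
        by_cases hup : H.adj u p
        · exact ih hup
        · exact absurd ⟨hune, hup, hnpu, w', huw', hadj_pw⟩ (helder u p)
    exact key w (hreach w hwC) huw
  · rintro ⟨huC, hurc⟩
    exact ⟨huC, rc, hrcC, hurc⟩
end

section
/- Let (H,T) be an elder vineyard and let C be a clan with root r(C). Then every ghost of C lies on the directed path in T from the root r(T) to r(C). -/
/-!
A clan is closed under out-edges of `H`, hence under descent in `T`. An edge from a ghost `g`
into a vertex `w` of the clan joins `T`-comparable vertices, and `g` cannot descend from `w`,
so `g` is an ancestor of `w`. So is `r(C)`; since every vertex has at most one parent in `T`,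
the ancestors of `w` form a chain, and `g` cannot descend from `r(C)`, so `g` lies above `r(C)`.
-/

open Relation

theorem Relation.ReflTransGen.mem_of_forall_mem_of_rel {α : Type*} {R : α → α → Prop}
    {C : Set α} (hC : ∀ u ∈ C, ∀ v, R u v → v ∈ C) {u v : α} (h : ReflTransGen R u v)
    (hu : u ∈ C) : v ∈ C := by
  induction h with
  | refl => exact hu
  | tail _ hvw ih => exact hC _ ih _ hvw

section

variable {V : Type} {H : Dgraph V} {T : V → V → Prop} {r : V}

theorem IsOutbranching.leftUnique (hT : IsOutbranching T r) : Relator.LeftUnique T := by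
  intro a b c hac hbc
  have hc : c ≠ r := by
    rintro rfl
    exact hT.2.1 a hac
  exact (hT.2.2 c hc).unique hac hbc

theorem IsOutbranching.reflTransGen_total (hT : IsOutbranching T r) {a b w : V}
    (ha : ReflTransGen T a w) (hb : ReflTransGen T b w) :
    ReflTransGen T a b ∨ ReflTransGen T b a :=
  (ReflTransGen.total_of_right_unique (r := Function.swap T)
      (fun _ _ _ h h' => hT.leftUnique h h')
      (reflTransGen_swap.2 ha) (reflTransGen_swap.2 hb)).symm.imp
    reflTransGen_swap.1 reflTransGen_swap.1

theorem OutbranchingOn.reflTransGen_root {C : Set V} {rc v : V}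
    (hC : OutbranchingOn T C rc) (hv : v ∈ C) : ReflTransGen T rc v :=
  ReflTransGen.mono (fun _ _ h => h.2.2) _ _ (hC.2.1 v hv)

theorem IsClanRoot.mem_of_reflTransGen {C : Set V} {rc u v : V} (hC : IsClanRoot H T C rc)
    (hTH : ∀ u v, T u v → H.adj u v) (h : ReflTransGen T u v) (hu : u ∈ C) : v ∈ C :=
  (ReflTransGen.mono hTH _ _ h).mem_of_forall_mem_of_rel hC.1 hu

theorem IsVineyard.reflTransGen_of_adj_mem_clan (hvine : IsVineyard H T r) {C : Set V}
    {rc g w : V} (hC : IsClanRoot H T C rc) (hg : g ∉ C) (hw : w ∈ C) (hgw : H.adj g w) :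
    ReflTransGen T g w :=
  (hvine.2.2 g w hgw).resolve_right fun h => hg (hC.mem_of_reflTransGen hvine.2.1 h hw)

end

theorem ghosts_on_root_path_general {V : Type} (H : Dgraph V) (T : V → V → Prop) (r : V)
    (hvine : IsVineyard H T r)
    (C : Set V) (rc : V) (hclan : IsClanRoot H T C rc) :
    ∀ g, g ∉ C → (∃ w ∈ C, H.adj g w) →
      Relation.ReflTransGen T r g ∧ Relation.ReflTransGen T g rc := by
  rintro g hg ⟨w, hw, hgw⟩
  have hg_above_w := hvine.reflTransGen_of_adj_mem_clan hclan hg hw hgw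
  have hrc_above_w := hclan.2.reflTransGen_root hw
  refine ⟨hvine.1.1 g, ?_⟩
  exact (hvine.1.reflTransGen_total hg_above_w hrc_above_w).resolve_right
    fun h => hg (hclan.mem_of_reflTransGen hvine.2.1 h hclan.2.1)

/-- In an elder vineyard `(H,T)`, every ghost of a clan `C` lies on the directed path
in `T` from the root `r(T)` to the root `r(C)` of the clan. -/
theorem ghosts_on_root_path {V : Type} [Fintype V] (H : Dgraph V) (T : V → V → Prop) (r : V)
    (helder : H.Elder) (hvine : IsVineyard H T r)
    (C : Set V) (rc : V) (hclan : IsClanRoot H T C rc) :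
    ∀ g, g ∉ C → (∃ w ∈ C, H.adj g w) →
      Relation.ReflTransGen T r g ∧ Relation.ReflTransGen T g rc :=
  ghosts_on_root_path_general H T r hvine C rc hclan
end

section
/- If a class of relational structures 𝒮 over a fixed dictionary σ has bounded expansion (meaning the class of Gaifman graphs {G_S : S ∈ 𝒮} has bounded expansion), then the class of (underlying undirected graphs of) incidence graphs {G^i_S : S ∈ 𝒮} has bounded expansion. -/
/-- A dictionary: a finite set of relation symbols, each with a finite arity. -/
structure Dict where
  Rel : Type
  relFin : Fintype Rel
  arity : Rel → ℕ

/-- A relational structure for a dictionary `σ`: a finite universe together with a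
realization of each relation symbol. -/
structure Struc (σ : Dict) where
  U : Type
  uFin : Fintype U
  real : ∀ R : σ.Rel, Set (Fin (σ.arity R) → U)

/-- The Gaifman graph of a relational structure `S`: distinct vertices `a`, `b` are
adjacent iff some tuple of some relation of `S` contains both. -/
def gaifman {σ : Dict} (S : Struc σ) : SimpleGraph S.U where
  Adj a b := a ≠ b ∧ ∃ (R : σ.Rel) (x : Fin (σ.arity R) → S.U),
    x ∈ S.real R ∧ (∃ i, x i = a) ∧ (∃ j, x j = b)
  symm := by
    constructor
    rintro a b ⟨hab, R, x, hx, ha, hb⟩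
    exact ⟨fun h => hab h.symm, R, x, hx, hb, ha⟩
  loopless := by constructor; rintro a ⟨h, -⟩; exact h rfl

/-- The tuples of a relational structure: pairs of a relation symbol `R` and a tuple
satisfying `R`. -/
def Tup {σ : Dict} (S : Struc σ) : Type :=
  Σ R : σ.Rel, {x : Fin (σ.arity R) → S.U // x ∈ S.real R}

/-- The (underlying undirected graph of the) incidence graph of a relational structure
`S`: its vertices are the elements of the universe together with two vertices
`v_{R,x̄}` and `v'_{R,x̄}` for each tuple `x̄ ∈ R^S`; its edges are `v_{R,x̄} v'_{R,x̄}`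
and `x_i v_{R,x̄}` for each `i`. -/
def incidence {σ : Dict} (S : Struc σ) : SimpleGraph (S.U ⊕ (Tup S ⊕ Tup S)) where
  Adj a b :=
    (∃ t : Tup S, (a = Sum.inr (Sum.inl t) ∧ b = Sum.inr (Sum.inr t)) ∨
      (b = Sum.inr (Sum.inl t) ∧ a = Sum.inr (Sum.inr t))) ∨
    (∃ (t : Tup S) (i : Fin (σ.arity t.1)),
      (a = Sum.inl (t.2.1 i) ∧ b = Sum.inr (Sum.inl t)) ∨
      (b = Sum.inl (t.2.1 i) ∧ a = Sum.inr (Sum.inl t)))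
  symm := by
    constructor
    rintro a b (⟨t, h | h⟩ | ⟨t, i, h | h⟩)
    · exact Or.inl ⟨t, Or.inr h⟩
    · exact Or.inl ⟨t, Or.inl h⟩
    · exact Or.inr ⟨t, i, Or.inr h⟩
    · exact Or.inr ⟨t, i, Or.inl h⟩
  loopless := by
    constructor
    rintro a (⟨t, ⟨h1, h2⟩ | ⟨h1, h2⟩⟩ | ⟨t, i, ⟨h1, h2⟩ | ⟨h1, h2⟩⟩) <;> simp_all

/-- `boundedReach A n x y`: `y` can be reached from `x` by at most `n` steps of the
relation `A`. -/
def boundedReach {V : Type} (A : V → V → Prop) : ℕ → V → V → Prop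
  | 0, x, y => x = y
  | n + 1, x, y => x = y ∨ ∃ z, A x z ∧ boundedReach A n z y

/-- `H` is a minor of depth `r` of `G`: `H` is obtained from a subgraph of `G` by
contracting vertex-disjoint connected subgraphs of radius at most `r` (the branch
sets `B w`) into single vertices, suppressing loops and parallel edges. -/
def IsShallowMinor {V W : Type} (G : SimpleGraph V) (r : ℕ) (H : SimpleGraph W) : Prop :=
  ∃ B : W → Set V,
    (∀ w1 w2, w1 ≠ w2 → Disjoint (B w1) (B w2)) ∧
    (∀ w, ∃ c ∈ B w, ∀ x ∈ B w,
      boundedReach (fun a b => a ∈ B w ∧ b ∈ B w ∧ G.Adj a b) r c x) ∧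
    (∀ w1 w2, H.Adj w1 w2 → ∃ x ∈ B w1, ∃ y ∈ B w2, G.Adj x y)

/-- A family of graphs has bounded expansion: there is `f : ℕ → ℝ` such that every
minor of depth `r` of a member has average degree at most `2 f(r)`, i.e.
`∇_r ≤ f(r)` for all members. -/
def BoundedExpansionFam {ι : Type} {Vt : ι → Type} (G : ∀ i, SimpleGraph (Vt i)) : Prop :=
  ∃ f : ℕ → ℝ, ∀ (i : ι) (r : ℕ) (W : Type) (H : SimpleGraph W),
    IsShallowMinor (G i) r H → (Nat.card H.edgeSet : ℝ) ≤ f r * (Nat.card W : ℝ)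

/-!
Let `H` be a depth-`r` minor of the incidence graph with branch sets `B w`. A branch set
containing no element of the universe is confined to `{v_t, v'_t}` for a single tuple `t`
(the only way out passes through an entry of `t`), so its vertex has degree at most
`arity t + 2` in `H`. The remaining branch sets, cut down to the universe, are the branch sets
of a depth-`2r` minor of the Gaifman graph: a path inside `B w` between universe elements
projects to a Gaifman path of no greater length, each detour `a → v_t → ⋯ → b` through a tuple
becoming the Gaifman edge `ab`; and an incidence edge between two such branch sets gives a
Gaifman edge between them, since each of them contains an entry of every tuple it meets.
Hence `∇_r` of the incidence graphs is at most `|∇_{2r}|` of the Gaifman graphs plus the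
maximal arity plus `2`.
-/

namespace boundedReach

variable {V : Type} {A : V → V → Prop}

theorem refl (n : ℕ) (x : V) : boundedReach A n x x := by
  cases n <;> simp [boundedReach]

theorem succ {n : ℕ} {x y : V} (h : boundedReach A n x y) : boundedReach A (n + 1) x y := by
  induction n generalizing x with
  | zero => exact Or.inl h
  | succ n ih =>
    rcases h with h | ⟨z, hxz, hzy⟩
    · exact Or.inl h
    · exact Or.inr ⟨z, hxz, ih hzy⟩

theorem mono {m n : ℕ} (hmn : m ≤ n) {x y : V} (h : boundedReach A m x y) :
    boundedReach A n x y := by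
  induction hmn with
  | refl => exact h
  | step _ ih => exact ih.succ

theorem trans {m n : ℕ} {x y z : V} (hxy : boundedReach A m x y) (hyz : boundedReach A n y z) :
    boundedReach A (m + n) x z := by
  induction m generalizing x with
  | zero => cases hxy; simpa using hyz
  | succ m ih =>
    rcases hxy with rfl | ⟨w, hxw, hwy⟩
    · exact hyz.mono (by omega)
    · rw [Nat.add_right_comm]
      exact Or.inr ⟨w, hxw, ih hwy⟩

theorem symm (hA : ∀ a b, A a b → A b a) {n : ℕ} {x y : V} (h : boundedReach A n x y) :
    boundedReach A n y x := by
  induction n generalizing x with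
  | zero => exact (show x = y from h).symm
  | succ n ih =>
    rcases h with rfl | ⟨z, hxz, hzy⟩
    · exact refl _ _
    · exact (ih hzy).trans (Or.inr ⟨x, hA _ _ hxz, rfl⟩)

theorem invariant (P : V → Prop) (hP : ∀ a b, A a b → P a → P b) {n : ℕ} {x y : V}
    (h : boundedReach A n x y) (hx : P x) : P y := by
  induction n generalizing x with
  | zero => exact (show x = y from h) ▸ hx
  | succ n ih =>
    rcases h with rfl | ⟨z, hxz, hzy⟩
    · exact hx
    · exact ih hzy (hP x z hxz hx)

theorem simulate {V' : Type} {A' : V' → V' → Prop} (R : V → V' → Prop)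
    (hR : ∀ x z a, A x z → R x a → R z a ∨ ∃ b, A' a b ∧ R z b)
    {n : ℕ} {x y : V} {a : V'} (h : boundedReach A n x y) (hx : R x a) :
    ∃ b, R y b ∧ boundedReach A' n a b := by
  induction n generalizing x a with
  | zero => exact ⟨a, (show x = y from h) ▸ hx, rfl⟩
  | succ n ih =>
    rcases h with rfl | ⟨z, hxz, hzy⟩
    · exact ⟨a, hx, refl _ _⟩
    rcases hR x z a hxz hx with hz | ⟨b, hab, hz⟩
    · obtain ⟨c, hyc, hac⟩ := ih hzy hz
      exact ⟨c, hyc, hac.succ⟩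
    · obtain ⟨c, hyc, hbc⟩ := ih hzy hz
      exact ⟨c, hyc, Or.inr ⟨b, hab, hbc⟩⟩

end boundedReach

namespace SimpleGraph

open Finset

variable {V W : Type} {G : SimpleGraph V}

def AdjWithin (G : SimpleGraph V) (B : Set V) (a b : V) : Prop := a ∈ B ∧ b ∈ B ∧ G.Adj a b

theorem boundedReach_adjWithin_of_center {B : Set V} {r : ℕ} {c : V}
    (hc : ∀ x ∈ B, boundedReach (G.AdjWithin B) r c x) {x y : V} (hx : x ∈ B) (hy : y ∈ B) :
    boundedReach (G.AdjWithin B) (r + r) x y :=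
  ((hc x hx).symm fun _ _ ⟨ha, hb, hab⟩ => ⟨hb, ha, hab.symm⟩).trans (hc y hy)

theorem card_edgeSet_le_card_induce_add (H : SimpleGraph W) [Finite W] (s : Set W) (d : ℕ)
    (hd : ∀ w ∉ s, Nat.card (H.neighborSet w) ≤ d) :
    Nat.card H.edgeSet ≤ Nat.card (H.induce s).edgeSet + d * Nat.card W := by
  classical
  have := Fintype.ofFinite W
  have hsplit : H.edgeFinset ⊆ (H.edgeFinset ∩ s.toFinset.sym2) ∪
      (univ.filter (· ∉ s)).biUnion fun w => H.incidenceFinset w := by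
    intro e he
    by_cases hs : ∀ a ∈ e, a ∈ s
    · exact mem_union_left _ (by simp_all [mem_sym2_iff])
    · push Not at hs
      obtain ⟨a, hae, has⟩ := hs
      exact mem_union_right _ (mem_biUnion.2
        ⟨a, by simpa using has, (H.mem_incidenceFinset a e).2 ⟨mem_edgeFinset.1 he, hae⟩⟩)
  have hinduce : #(H.edgeFinset ∩ s.toFinset.sym2) = #(H.induce s).edgeFinset := by
    rw [← map_edgeFinset_induce, card_map]
  calc Nat.card H.edgeSet = #H.edgeFinset := by rw [edgeFinset_card, Nat.card_eq_fintype_card]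
    _ ≤ #(H.edgeFinset ∩ s.toFinset.sym2) + ∑ w with w ∉ s, #(H.incidenceFinset w) :=
      (card_le_card hsplit).trans
        ((card_union_le _ _).trans (Nat.add_le_add_left card_biUnion_le _))
    _ ≤ Nat.card (H.induce s).edgeSet + ∑ w with w ∉ s, d := by
      rw [hinduce, edgeFinset_card, ← Nat.card_eq_fintype_card]
      gcongr with w hw
      rw [card_incidenceFinset_eq_degree, ← card_neighborSet_eq_degree,
        ← Nat.card_eq_fintype_card]
      exact hd w (by simpa using hw)
    _ ≤ Nat.card (H.induce s).edgeSet + d * Nat.card W := by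
      rw [sum_const, smul_eq_mul, mul_comm d, Nat.card_eq_fintype_card (α := W)]
      gcongr
      exact card_le_univ _

theorem card_neighborSet_le_of_branchSets {H : SimpleGraph W} {B : W → Set V}
    (hdisj : ∀ w₁ w₂, w₁ ≠ w₂ → Disjoint (B w₁) (B w₂))
    (hadj : ∀ w₁ w₂, H.Adj w₁ w₂ → ∃ x ∈ B w₁, ∃ y ∈ B w₂, G.Adj x y)
    (w : W) {N : Set V} [Finite N] (hN : ∀ x ∈ B w, ∀ y, G.Adj x y → y ∈ N) :
    Nat.card (H.neighborSet w) ≤ Nat.card N := by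
  have hmeet : ∀ w' : H.neighborSet w, ∃ y : N, y.1 ∈ B w' := fun ⟨w', hw'⟩ =>
    let ⟨x, hx, y, hy, hxy⟩ := hadj w w' hw'
    ⟨⟨y, hN x hx y hxy⟩, hy⟩
  choose g hg using hmeet
  refine Nat.card_le_card_of_injective g fun w₁ w₂ h => Subtype.ext ?_
  by_contra hne
  exact Set.disjoint_left.1 (hdisj _ _ hne) (hg w₁) (h ▸ hg w₂)

end SimpleGraph

theorem IsShallowMinor.finite {V W : Type} [Finite V] {G : SimpleGraph V} {r : ℕ}
    {H : SimpleGraph W} (h : IsShallowMinor G r H) : Finite W := by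
  obtain ⟨B, hdisj, hcen, -⟩ := h
  choose c hc _ using hcen
  refine Finite.of_injective c fun w₁ w₂ h => ?_
  by_contra hne
  exact Set.disjoint_left.1 (hdisj _ _ hne) (hc w₁) (h ▸ hc w₂)

instance (σ : Dict) : Fintype σ.Rel := σ.relFin

instance {σ : Dict} (S : Struc σ) : Fintype S.U := S.uFin

instance {σ : Dict} (S : Struc σ) : Finite (Tup S) := by
  unfold Tup
  infer_instance

def Dict.maxArity (σ : Dict) : ℕ := Finset.univ.sup σ.arity

theorem Dict.arity_le_maxArity (σ : Dict) (R : σ.Rel) : σ.arity R ≤ σ.maxArity :=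
  Finset.le_sup (Finset.mem_univ R)

namespace Struc

open SimpleGraph Sum

variable {σ : Dict} {S : Struc σ}

-- `inr (inl t)` and `inr (inr t)` are the vertices `v_t` and `v'_t` of the tuple `t`.
def IncidenceAdj : S.U ⊕ (Tup S ⊕ Tup S) → S.U ⊕ (Tup S ⊕ Tup S) → Prop
  | inl _, inl _ => False
  | inl a, inr (inl t) => ∃ i, t.2.1 i = a
  | inl _, inr (inr _) => False
  | inr (inl t), inl a => ∃ i, t.2.1 i = a
  | inr (inl _), inr (inl _) => False
  | inr (inl t), inr (inr s) => t = s
  | inr (inr _), inl _ => False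
  | inr (inr t), inr (inl s) => t = s
  | inr (inr _), inr (inr _) => False

theorem incidence_adj_iff {x y : S.U ⊕ (Tup S ⊕ Tup S)} :
    (incidence S).Adj x y ↔ IncidenceAdj x y := by
  rcases x with a | t | t <;> rcases y with b | s | s <;> simp [incidence, IncidenceAdj, eq_comm]

def Anchored (B : Set (S.U ⊕ (Tup S ⊕ Tup S))) : Prop :=
  (∀ t : Tup S, inr (inr t) ∈ B → inr (inl t) ∈ B) ∧
    ∀ t : Tup S, inr (inl t) ∈ B → ∃ j, inl (t.2.1 j) ∈ B

theorem anchored_of_boundedReach {B : Set (S.U ⊕ (Tup S ⊕ Tup S))} {n : ℕ} {u : S.U}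
    (hreach : ∀ x ∈ B, boundedReach ((incidence S).AdjWithin B) n (inl u) x) : Anchored B := by
  constructor
  · intro t ht
    refine boundedReach.invariant (fun y => ∀ t, y = inr (inr t) → inr (inl t) ∈ B) ?_
      (hreach _ ht) (by simp) t rfl
    rintro y z ⟨hy, -, hyz⟩ - t rfl
    rcases y with a | s | s <;> simp only [incidence_adj_iff, IncidenceAdj] at hyz
    exact hyz ▸ hy
  · intro t ht
    refine boundedReach.invariant
      (fun y => ∀ t, y = inr (inl t) ∨ y = inr (inr t) → ∃ j, inl (t.2.1 j) ∈ B) ?_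
      (hreach _ ht) (by simp) t (Or.inl rfl)
    rintro y z ⟨hy, -, hyz⟩ hP t (rfl | rfl) <;>
      rcases y with a | s | s <;> simp only [incidence_adj_iff, IncidenceAdj] at hyz
    · obtain ⟨j, rfl⟩ := hyz
      exact ⟨j, hy⟩
    · exact hP t (Or.inr (hyz ▸ rfl))
    · exact hP t (Or.inl (hyz ▸ rfl))

theorem eq_node_or_eq_pendant_of_boundedReach {B : Set (S.U ⊕ (Tup S ⊕ Tup S))}
    (hB : ∀ u, inl u ∉ B) {n : ℕ} {t : Tup S} {x y : S.U ⊕ (Tup S ⊕ Tup S)}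
    (h : boundedReach ((incidence S).AdjWithin B) n x y)
    (hx : x = inr (inl t) ∨ x = inr (inr t)) : y = inr (inl t) ∨ y = inr (inr t) := by
  refine boundedReach.invariant (fun y => y = inr (inl t) ∨ y = inr (inr t)) ?_ h hx
  rintro y z ⟨-, hz, hyz⟩ (rfl | rfl) <;> rcases z with a | s | s <;>
    simp only [incidence_adj_iff, IncidenceAdj] at hyz
  · exact absurd hz (hB a)
  · exact .inr (hyz ▸ rfl)
  · exact .inl (hyz ▸ rfl)

def entries : S.U ⊕ (Tup S ⊕ Tup S) → Set S.U
  | inl a => {a}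
  | inr (inl t) => Set.range t.2.1
  | inr (inr t) => Set.range t.2.1

theorem boundedReach_gaifman_of_incidence {B : Set (S.U ⊕ (Tup S ⊕ Tup S))} {n : ℕ}
    {a b : S.U} (h : boundedReach ((incidence S).AdjWithin B) n (inl a) (inl b))
    (ha : inl a ∈ B) : boundedReach ((gaifman S).AdjWithin {u | inl u ∈ B}) n a b := by
  let R (x : S.U ⊕ (Tup S ⊕ Tup S)) (a : S.U) : Prop := inl a ∈ B ∧ a ∈ entries x
  have hstep : ∀ x z a, (incidence S).AdjWithin B x z → R x a →
      R z a ∨ ∃ b, (gaifman S).AdjWithin {u | inl u ∈ B} a b ∧ R z b := by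
    rintro x z a ⟨-, hz, hxz⟩ ⟨ha, hxa⟩
    rcases x with c | t | t <;> rcases z with d | s | s <;>
      simp only [incidence_adj_iff, IncidenceAdj] at hxz
    · obtain ⟨i, rfl⟩ := hxz
      obtain rfl : a = s.2.1 i := hxa
      exact Or.inl ⟨ha, i, rfl⟩
    · obtain ⟨i, rfl⟩ := hxz
      obtain ⟨j, rfl⟩ := hxa
      by_cases hij : t.2.1 j = t.2.1 i
      · exact Or.inl ⟨ha, hij⟩
      · exact Or.inr
          ⟨_, ⟨ha, hz, hij, t.1, t.2.1, t.2.2, ⟨j, rfl⟩, ⟨i, rfl⟩⟩, hz, rfl⟩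
    · exact Or.inl ⟨ha, hxz ▸ hxa⟩
    · exact Or.inl ⟨ha, hxz ▸ hxa⟩
  obtain ⟨b', ⟨-, rfl⟩, hab'⟩ := h.simulate R hstep ⟨ha, rfl⟩
  exact hab'

theorem exists_gaifman_adj_of_incidence_adj {B₁ B₂ : Set (S.U ⊕ (Tup S ⊕ Tup S))}
    (hdisj : Disjoint B₁ B₂) (h₁ : Anchored B₁) (h₂ : Anchored B₂)
    {x y : S.U ⊕ (Tup S ⊕ Tup S)} (hx : x ∈ B₁) (hy : y ∈ B₂)
    (hxy : (incidence S).Adj x y) :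
    ∃ a ∈ {u | inl u ∈ B₁}, ∃ b ∈ {u | inl u ∈ B₂}, (gaifman S).Adj a b := by
  have hne : ∀ {a b}, inl a ∈ B₁ → inl b ∈ B₂ → a ≠ b := fun ha hb hab =>
    Set.disjoint_left.1 hdisj ha (hab ▸ hb)
  rcases x with a | t | t <;> rcases y with b | s | s <;>
    simp only [incidence_adj_iff, IncidenceAdj] at hxy
  · obtain ⟨i, rfl⟩ := hxy
    obtain ⟨j, hj⟩ := h₂.2 s hy
    exact ⟨_, hx, _, hj, hne hx hj, s.1, s.2.1, s.2.2, ⟨i, rfl⟩, ⟨j, rfl⟩⟩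
  · obtain ⟨i, rfl⟩ := hxy
    obtain ⟨j, hj⟩ := h₁.2 t hx
    exact ⟨_, hj, _, hy, hne hj hy, t.1, t.2.1, t.2.2, ⟨j, rfl⟩, ⟨i, rfl⟩⟩
  · subst hxy
    exact absurd (h₂.1 t hy) (Set.disjoint_left.1 hdisj hx)
  · subst hxy
    exact absurd (h₁.1 t hx) (Set.disjoint_right.1 hdisj hy)

theorem card_neighborSet_le_of_subset_tuple {W : Type} {H : SimpleGraph W}
    {B : W → Set (S.U ⊕ (Tup S ⊕ Tup S))}
    (hdisj : ∀ w₁ w₂, w₁ ≠ w₂ → Disjoint (B w₁) (B w₂))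
    (hadj : ∀ w₁ w₂, H.Adj w₁ w₂ → ∃ x ∈ B w₁, ∃ y ∈ B w₂, (incidence S).Adj x y)
    {w : W} {t : Tup S} (ht : ∀ x ∈ B w, x = inr (inl t) ∨ x = inr (inr t)) :
    Nat.card (H.neighborSet w) ≤ σ.maxArity + 2 := by
  let N : Set (S.U ⊕ (Tup S ⊕ Tup S)) :=
    insert (inr (inl t)) (insert (inr (inr t)) (Set.range fun j => inl (t.2.1 j)))
  have hN : ∀ x ∈ B w, ∀ y, (incidence S).Adj x y → y ∈ N := by
    intro x hx y hxy
    rcases ht x hx with rfl | rfl <;> rcases y with b | s | s <;>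
      simp only [incidence_adj_iff, IncidenceAdj] at hxy
    · obtain ⟨i, rfl⟩ := hxy
      exact .inr (.inr ⟨i, rfl⟩)
    · exact .inr (.inl (hxy ▸ rfl))
    · exact .inl (hxy ▸ rfl)
  calc Nat.card (H.neighborSet w)
      ≤ Nat.card N := card_neighborSet_le_of_branchSets hdisj hadj w hN
    _ ≤ σ.arity t.1 + 2 := by
      have hrange := Finite.card_range_le fun j => (inl (t.2.1 j) : S.U ⊕ (Tup S ⊕ Tup S))
      rw [Nat.card_eq_fintype_card (α := Fin _), Fintype.card_fin, Nat.card_coe_set_eq] at hrange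
      rw [Nat.card_coe_set_eq]
      grw [Set.ncard_insert_le, Set.ncard_insert_le, hrange]
    _ ≤ σ.maxArity + 2 := by grw [σ.arity_le_maxArity t.1]

theorem exists_isShallowMinor_gaifman_induce {r : ℕ} {W : Type} {H : SimpleGraph W}
    (hH : IsShallowMinor (incidence S) r H) :
    ∃ s : Set W, IsShallowMinor (gaifman S) (2 * r) (H.induce s) ∧
      ∀ w ∉ s, Nat.card (H.neighborSet w) ≤ σ.maxArity + 2 := by
  obtain ⟨B, hdisj, hcen, hadj⟩ := hH
  have hanchored : ∀ w u, inl u ∈ B w → Anchored (B w) := fun w u hu =>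
    let ⟨_, _, hc⟩ := hcen w
    anchored_of_boundedReach fun _ hx => boundedReach_adjWithin_of_center hc hu hx
  refine ⟨{w | ∃ u, inl u ∈ B w}, ⟨fun w => {u | inl u ∈ B w.1}, ?_, ?_, ?_⟩, ?_⟩
  · intro w₁ w₂ hne
    exact Set.disjoint_left.2 fun _ h₁ h₂ =>
      Set.disjoint_left.1 (hdisj _ _ (Subtype.coe_ne_coe.2 hne)) h₁ h₂
  · rintro ⟨w, u, hu⟩
    obtain ⟨c, -, hc⟩ := hcen w
    refine ⟨u, hu, fun v hv => ?_⟩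
    rw [two_mul]
    exact boundedReach_gaifman_of_incidence (boundedReach_adjWithin_of_center hc hu hv) hu
  · rintro ⟨w₁, u₁, hu₁⟩ ⟨w₂, u₂, hu₂⟩ h
    rw [comap_adj] at h
    obtain ⟨x, hx, y, hy, hxy⟩ := hadj w₁ w₂ h
    exact exists_gaifman_adj_of_incidence_adj (hdisj _ _ h.ne) (hanchored w₁ u₁ hu₁)
      (hanchored w₂ u₂ hu₂) hx hy hxy
  · intro w hw
    have hU : ∀ u, inl u ∉ B w := fun u hu => hw ⟨u, hu⟩
    obtain ⟨c, hc, hreach⟩ := hcen w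
    rcases c with u | t | t
    · exact absurd hc (hU u)
    · exact card_neighborSet_le_of_subset_tuple hdisj hadj fun x hx =>
        eq_node_or_eq_pendant_of_boundedReach hU (hreach x hx) (.inl rfl)
    · exact card_neighborSet_le_of_subset_tuple hdisj hadj fun x hx =>
        eq_node_or_eq_pendant_of_boundedReach hU (hreach x hx) (.inr rfl)

end Struc

/-- If a class of relational structures has bounded expansion (i.e. the class of its
Gaifman graphs has bounded expansion), then the class of its incidence graphs has
bounded expansion. -/
theorem incidence_boundedExpansion (σ : Dict) {ι : Type} (S : ι → Struc σ)
    (hBE : BoundedExpansionFam (fun i => gaifman (S i))) :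
    BoundedExpansionFam (fun i => incidence (S i)) := by
  obtain ⟨f, hf⟩ := hBE
  refine ⟨fun r => |f (2 * r)| + (σ.maxArity + 2), fun i r W H hH => ?_⟩
  have : Finite W := hH.finite
  obtain ⟨s, hs, hdeg⟩ := Struc.exists_isShallowMinor_gaifman_induce hH
  have hgaifman := hf i (2 * r) s (H.induce s) hs
  have hsplit : (Nat.card H.edgeSet : ℝ) ≤
      Nat.card (H.induce s).edgeSet + (σ.maxArity + 2) * Nat.card W := by
    exact_mod_cast H.card_edgeSet_le_card_induce_add s _ hdeg
  have hsW : (Nat.card s : ℝ) ≤ Nat.card W := by exact_mod_cast Finite.card_subtype_le _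
  calc (Nat.card H.edgeSet : ℝ)
      ≤ f (2 * r) * Nat.card s + (σ.maxArity + 2) * Nat.card W := by linarith
    _ ≤ |f (2 * r)| * Nat.card W + (σ.maxArity + 2) * Nat.card W := by
      gcongr
      exact le_abs_self _
    _ = (|f (2 * r)| + (σ.maxArity + 2)) * Nat.card W := by ring
end
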